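/- arXiv:2407.17694 — 2 statements merged into one kernel-verified Lean document; each statement's English description precedes it below -/
import Mathlib

section
/- Let 𝓚₀ be a characteristic kernel on ℝ^{d_X+d_Y+d_Z} with Bochner-integrable feature map for both P_{XYZ} and P_{X̃ỸZ}. Then MMDCI(P_{XYZ}) := ‖E[𝓚₀((X,Y,Z),·)] − E[𝓚₀((X̃,Ỹ,Z),·)]‖²_{ℍ₀} equals zero if and only if X and Y are conditionally independent given Z. -/
/-!
Since the feature map is characteristic, MMDCI vanishes exactly when `(X, Y, Z)` and `(X̃, Ỹ, Z)`
have the same law, i.e. when the laws of `(Z, X, Y)` and `(Z, X̃, Ỹ)` agree. Conditional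
independence of `X̃` and `Ỹ` together with the matching conditional marginals shows that the law of
`(Z, X̃, Ỹ)` is `P_Z ⊗ (P_{X|Z} × P_{Y|Z})`, and the law of `(Z, X, Y)` equals this measure exactly
when `X ⟂ Y | Z`.
-/

open MeasureTheory ProbabilityTheory

def IsCharacteristic {E H : Type*} [MeasurableSpace E] [NormedAddCommGroup H] [NormedSpace ℝ H]
    (φ : E → H) : Prop :=
  ∀ P Q : Measure E, IsProbabilityMeasure P → IsProbabilityMeasure Q →
    Integrable φ P → Integrable φ Q → (∫ w, φ w ∂P = ∫ w, φ w ∂Q) → P = Q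

section MeanEmbedding

variable {Ω E H : Type*} [MeasurableSpace Ω] [MeasurableSpace E]
  [NormedAddCommGroup H] [MeasurableSpace H] [BorelSpace H]
  {μ : Measure Ω} {φ : E → H} {g : Ω → E}

lemma aestronglyMeasurable_map_of_comp (hg : Measurable g) (hφ : Measurable φ)
    (h : AEStronglyMeasurable (fun ω => φ (g ω)) μ) : AEStronglyMeasurable φ (μ.map g) := by
  have hid : AEStronglyMeasurable id ((μ.map g).map φ) := by
    rw [Measure.map_map hφ hg]
    exact h.aestronglyMeasurable_id_map
  exact hid.comp_aemeasurable hφ.aemeasurable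

lemma integrable_map_of_integrable_comp (hg : Measurable g) (hφ : Measurable φ)
    (h : Integrable (fun ω => φ (g ω)) μ) : Integrable φ (μ.map g) :=
  (integrable_map_measure (aestronglyMeasurable_map_of_comp hg hφ h.1) hg.aemeasurable).mpr h

variable [NormedSpace ℝ H]

lemma integral_comp_eq_integral_map (hg : Measurable g) (hφ : Measurable φ)
    (h : AEStronglyMeasurable (fun ω => φ (g ω)) μ) :
    ∫ ω, φ (g ω) ∂μ = ∫ w, φ w ∂(μ.map g) :=
  (integral_map hg.aemeasurable (aestronglyMeasurable_map_of_comp hg hφ h)).symm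

lemma IsCharacteristic.integral_comp_eq_iff_map_eq [IsProbabilityMeasure μ]
    (hchar : IsCharacteristic φ) (hφ : Measurable φ) {g' : Ω → E}
    (hg : Measurable g) (hg' : Measurable g')
    (hint : Integrable (fun ω => φ (g ω)) μ) (hint' : Integrable (fun ω => φ (g' ω)) μ) :
    ∫ ω, φ (g ω) ∂μ = ∫ ω, φ (g' ω) ∂μ ↔ μ.map g = μ.map g' := by
  have := Measure.isProbabilityMeasure_map (μ := μ) hg.aemeasurable
  have := Measure.isProbabilityMeasure_map (μ := μ) hg'.aemeasurable
  rw [integral_comp_eq_integral_map hg hφ hint.1, integral_comp_eq_integral_map hg' hφ hint'.1]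
  exact ⟨hchar _ _ inferInstance inferInstance (integrable_map_of_integrable_comp hg hφ hint)
    (integrable_map_of_integrable_comp hg' hφ hint'), fun h => h ▸ rfl⟩

end MeanEmbedding

section ConditionalIndependence

variable {Ω α β γ : Type*} [MeasurableSpace Ω] [MeasurableSpace α] [MeasurableSpace β]
  [MeasurableSpace γ] {μ : Measure Ω}

lemma map_prod_eq_iff_map_prod_rotate_eq {X X' : Ω → α} {Y Y' : Ω → β} {Z Z' : Ω → γ}
    (hX : Measurable X) (hY : Measurable Y) (hZ : Measurable Z)
    (hX' : Measurable X') (hY' : Measurable Y') (hZ' : Measurable Z') :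
    μ.map (fun ω => (X ω, Y ω, Z ω)) = μ.map (fun ω => (X' ω, Y' ω, Z' ω)) ↔
      μ.map (fun ω => (Z ω, X ω, Y ω)) = μ.map (fun ω => (Z' ω, X' ω, Y' ω)) := by
  let e : γ × α × β ≃ᵐ α × β × γ := MeasurableEquiv.prodComm.trans MeasurableEquiv.prodAssoc
  have rotate : ∀ {X : Ω → α} {Y : Ω → β} {Z : Ω → γ}, Measurable X → Measurable Y →
      Measurable Z → μ.map (fun ω => (X ω, Y ω, Z ω)) = (μ.map (fun ω => (Z ω, X ω, Y ω))).map e :=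
    fun hX hY hZ => (Measure.map_map e.measurable (hZ.prodMk (hX.prodMk hY))).symm
  rw [rotate hX hY hZ, rotate hX' hY' hZ', e.map_measurableEquiv_injective.eq_iff]

variable [StandardBorelSpace Ω] [IsProbabilityMeasure μ] [StandardBorelSpace α] [Nonempty α]
  [StandardBorelSpace β] [Nonempty β]

lemma map_prod_eq_compProd_of_condIndepFun {X : Ω → α} {Y : Ω → β} {Z : Ω → γ}
    (hX : Measurable X) (hY : Measurable Y) (hZ : Measurable Z) (hXY : X ⟂ᵢ[Z, hZ; μ] Y) :
    μ.map (fun ω => (Z ω, X ω, Y ω)) = μ.map Z ⊗ₘ (condDistrib X Z μ ×ₖ condDistrib Y Z μ) := by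
  rw [Measure.compProd_eq_comp_prod]
  exact (condIndepFun_iff_map_prod_eq_prod_condDistrib_prod_condDistrib hX hY hZ).mp hXY

lemma condIndepFun_iff_map_prod_eq_of_condIndepFun {X Xt : Ω → α} {Y Yt : Ω → β} {Z : Ω → γ}
    (hX : Measurable X) (hY : Measurable Y) (hZ : Measurable Z)
    (hXt : Measurable Xt) (hYt : Measurable Yt) (htilde : Xt ⟂ᵢ[Z, hZ; μ] Yt)
    (hcondX : ∀ᵐ z ∂(μ.map Z), condDistrib Xt Z μ z = condDistrib X Z μ z)
    (hcondY : ∀ᵐ z ∂(μ.map Z), condDistrib Yt Z μ z = condDistrib Y Z μ z) :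
    X ⟂ᵢ[Z, hZ; μ] Y ↔
      μ.map (fun ω => (Z ω, X ω, Y ω)) = μ.map (fun ω => (Z ω, Xt ω, Yt ω)) := by
  have hprod : condDistrib Xt Z μ ×ₖ condDistrib Yt Z μ
      =ᵐ[μ.map Z] condDistrib X Z μ ×ₖ condDistrib Y Z μ := by
    filter_upwards [hcondX, hcondY] with z hzX hzY
    rw [Kernel.prod_apply, Kernel.prod_apply, hzX, hzY]
  rw [map_prod_eq_compProd_of_condIndepFun hXt hYt hZ htilde, Measure.compProd_congr hprod,
    Measure.compProd_eq_comp_prod]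
  exact condIndepFun_iff_map_prod_eq_prod_condDistrib_prod_condDistrib hX hY hZ

end ConditionalIndependence

theorem mmdci_eq_zero_iff_condIndep_general
    (dX dY dZ : ℕ)
    {Ω : Type} [MeasurableSpace Ω] [StandardBorelSpace Ω]
    (μ : Measure Ω) [IsProbabilityMeasure μ]
    (X : Ω → EuclideanSpace ℝ (Fin dX)) (Y : Ω → EuclideanSpace ℝ (Fin dY))
    (Z : Ω → EuclideanSpace ℝ (Fin dZ))
    (Xt : Ω → EuclideanSpace ℝ (Fin dX)) (Yt : Ω → EuclideanSpace ℝ (Fin dY))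
    (hX : Measurable X) (hY : Measurable Y) (hZ : Measurable Z)
    (hXt : Measurable Xt) (hYt : Measurable Yt)
    -- augmentation properties of (X̃, Ỹ)
    (htilde : CondIndepFun (MeasurableSpace.comap Z inferInstance) hZ.comap_le Xt Yt μ)
    (hcondX : ∀ᵐ z ∂(μ.map Z), condDistrib Xt Z μ z = condDistrib X Z μ z)
    (hcondY : ∀ᵐ z ∂(μ.map Z), condDistrib Yt Z μ z = condDistrib Y Z μ z)
    -- the RKHS ℍ₀ and the feature map φ of the kernel 𝓚₀
    {H0 : Type} [NormedAddCommGroup H0] [InnerProductSpace ℝ H0] [MeasurableSpace H0] [BorelSpace H0]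
    (φ : (EuclideanSpace ℝ (Fin dX) × EuclideanSpace ℝ (Fin dY) × EuclideanSpace ℝ (Fin dZ)) → H0)
    (hφ : Measurable φ)
    -- 𝓚₀ is characteristic: equality of mean embeddings implies equality of measures
    (hchar : ∀ P Q : Measure (EuclideanSpace ℝ (Fin dX) × EuclideanSpace ℝ (Fin dY) ×
        EuclideanSpace ℝ (Fin dZ)), IsProbabilityMeasure P → IsProbabilityMeasure Q →
        Integrable φ P → Integrable φ Q → (∫ w, φ w ∂P = ∫ w, φ w ∂Q) → P = Q)
    -- Bochner integrability of the feature maps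
    (hint1 : Integrable (fun ω => φ (X ω, Y ω, Z ω)) μ)
    (hint2 : Integrable (fun ω => φ (Xt ω, Yt ω, Z ω)) μ) :
    ‖(∫ ω, φ (X ω, Y ω, Z ω) ∂μ) - ∫ ω, φ (Xt ω, Yt ω, Z ω) ∂μ‖ ^ 2 = 0 ↔
      CondIndepFun (MeasurableSpace.comap Z inferInstance) hZ.comap_le X Y μ := by
  have hchar' : IsCharacteristic φ := hchar
  rw [pow_eq_zero_iff two_ne_zero, norm_eq_zero, sub_eq_zero,
    hchar'.integral_comp_eq_iff_map_eq hφ (hX.prodMk (hY.prodMk hZ)) (hXt.prodMk (hYt.prodMk hZ))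
      hint1 hint2,
    map_prod_eq_iff_map_prod_rotate_eq hX hY hZ hXt hYt hZ,
    condIndepFun_iff_map_prod_eq_of_condIndepFun hX hY hZ hXt hYt htilde hcondX hcondY]

/-- MMDCI(P_{XYZ}) = 0 iff X and Y are conditionally independent given Z, for a
characteristic kernel 𝓚₀ with feature map φ into its RKHS ℍ₀. -/
theorem mmdci_eq_zero_iff_condIndep
    (dX dY dZ : ℕ)
    {Ω : Type} [MeasurableSpace Ω] [StandardBorelSpace Ω]
    (μ : Measure Ω) [IsProbabilityMeasure μ]
    (X : Ω → EuclideanSpace ℝ (Fin dX)) (Y : Ω → EuclideanSpace ℝ (Fin dY))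
    (Z : Ω → EuclideanSpace ℝ (Fin dZ))
    (Xt : Ω → EuclideanSpace ℝ (Fin dX)) (Yt : Ω → EuclideanSpace ℝ (Fin dY))
    (hX : Measurable X) (hY : Measurable Y) (hZ : Measurable Z)
    (hXt : Measurable Xt) (hYt : Measurable Yt)
    -- augmentation properties of (X̃, Ỹ)
    (hpair : CondIndepFun (MeasurableSpace.comap Z inferInstance) hZ.comap_le
      (fun ω => (Xt ω, Yt ω)) (fun ω => (X ω, Y ω)) μ)
    (htilde : CondIndepFun (MeasurableSpace.comap Z inferInstance) hZ.comap_le Xt Yt μ)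
    (hcondX : ∀ᵐ z ∂(μ.map Z), condDistrib Xt Z μ z = condDistrib X Z μ z)
    (hcondY : ∀ᵐ z ∂(μ.map Z), condDistrib Yt Z μ z = condDistrib Y Z μ z)
    -- the RKHS ℍ₀ and the feature map φ of the kernel 𝓚₀
    {H0 : Type} [NormedAddCommGroup H0] [InnerProductSpace ℝ H0] [CompleteSpace H0] [MeasurableSpace H0] [BorelSpace H0]
    (φ : (EuclideanSpace ℝ (Fin dX) × EuclideanSpace ℝ (Fin dY) × EuclideanSpace ℝ (Fin dZ)) → H0)
    (hφ : Measurable φ)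
    -- 𝓚₀ is characteristic: equality of mean embeddings implies equality of measures
    (hchar : ∀ P Q : Measure (EuclideanSpace ℝ (Fin dX) × EuclideanSpace ℝ (Fin dY) ×
        EuclideanSpace ℝ (Fin dZ)), IsProbabilityMeasure P → IsProbabilityMeasure Q →
        Integrable φ P → Integrable φ Q → (∫ w, φ w ∂P = ∫ w, φ w ∂Q) → P = Q)
    -- Bochner integrability of the feature maps
    (hint1 : Integrable (fun ω => φ (X ω, Y ω, Z ω)) μ)
    (hint2 : Integrable (fun ω => φ (Xt ω, Yt ω, Z ω)) μ) :
    ‖(∫ ω, φ (X ω, Y ω, Z ω) ∂μ) - ∫ ω, φ (Xt ω, Yt ω, Z ω) ∂μ‖ ^ 2 = 0 ↔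
      CondIndepFun (MeasurableSpace.comap Z inferInstance) hZ.comap_le X Y μ :=
  mmdci_eq_zero_iff_condIndep_general dX dY dZ μ X Y Z Xt Yt hX hY hZ hXt hYt htilde hcondX hcondY φ
    hφ hchar hint1 hint2
end

section
/- Suppose 𝓚_X ⊗ 𝓚_Z has an RKHS ℍ_X ⊗ ℍ_Z dense in L²(ℝ^{d_X+d_Z}, P_{XZ}) and ℍ_Y is dense in L²(ℝ^{d_Y}, P_Y). If E[f(X)g(Y) | Z] = E[f(X)|Z]·E[g(Y)|Z] almost surely for all f ∈ ℍ_X and g ∈ ℍ_Y, and moreover E[φ(X,Z)ψ(Y)] = E[E[φ(X,Z)|Z]E[ψ(Y)|Z]] for all φ ∈ ℍ_X ⊗ ℍ_Z and ψ ∈ ℍ_Y, then X ⊥ Y | Z. -/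
/-!
For the orthogonal projection `P = E[· | Z]` of `L²(μ)`, the form
`(φ, ψ) ↦ E[φ ψ] - E[E[φ | Z] E[ψ | Z]] = ⟪φ, ψ⟫ - ⟪P φ, P ψ⟫` is continuous, so vanishing on the
dense families it vanishes on all of `L²(P_{XZ}) × L²(P_Y)`; moving `L²` distances from the laws
back to `Ω` uses that a function whose composition with a random variable is a.e. measurable is
a.e. measurable for its law. With `φ = 1_{s × D}` and `ψ = 1_t` this reads
`∫_{Z ∈ D} 1_{X ∈ s} 1_{Y ∈ t} = ∫_{Z ∈ D} P(X ∈ s | Z) P(Y ∈ t | Z)` for every Borel `D`,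
which is `P(X ∈ s, Y ∈ t | Z) = P(X ∈ s | Z) P(Y ∈ t | Z)`.
-/

open MeasureTheory ProbabilityTheory Set
open scoped ENNReal

namespace MeasureTheory

section Pushforward

variable {Ω β : Type*} [MeasurableSpace Ω] [StandardBorelSpace Ω] [MeasurableSpace β]
  [MeasurableEq β] {μ : Measure Ω} [IsFiniteMeasure μ] {f : Ω → β}

/- Disintegrate `μ` along `f`: for a.e. `x` the conditional law lives on `f ⁻¹' {x}`, where a
measurable version `W` of `G ∘ f` equals `G x` almost surely, so `G x = ∫⁻ W ∂(κ x)`. -/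
theorem aemeasurable_map_of_aemeasurable_comp (hf : Measurable f) {G : β → ℝ≥0∞}
    (hG : AEMeasurable (G ∘ f) μ) : AEMeasurable G (μ.map f) := by
  rcases isEmpty_or_nonempty Ω with hΩ | hΩ
  · simp [Measure.eq_zero_of_isEmpty μ]
  obtain ⟨W, hW, hGW⟩ := hG
  obtain ⟨N, hbad, hN, hμN⟩ := exists_measurable_superset_of_null (ae_iff.1 hGW)
  have hgraph : Measurable fun ω => (f ω, ω) := hf.prodMk measurable_id
  set ρ := μ.map fun ω => (f ω, ω)
  have hρ : ∀ᵐ p ∂ρ, f p.2 = p.1 ∧ p.2 ∉ N := by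
    refine (ae_map_iff hgraph.aemeasurable ?_).2 (measure_eq_zero_iff_ae_notMem.1 hμN |>.mono
      fun ω hω => ⟨rfl, hω⟩)
    exact (measurableSet_eq_fun (hf.comp measurable_snd) measurable_fst).inter
      (hN.compl.preimage measurable_snd)
  rw [← Measure.disintegrate ρ ρ.condKernel] at hρ
  refine ⟨fun x => ∫⁻ ω, W ω ∂ρ.condKernel x, hW.lintegral_kernel, ?_⟩
  rw [← Measure.fst_map_prodMk measurable_id]
  filter_upwards [Measure.ae_ae_of_ae_compProd hρ] with x hx
  have hWx : ∀ᵐ ω ∂ρ.condKernel x, W ω = G x := hx.mono fun ω ⟨hfω, hωN⟩ => by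
    rw [← hfω]; exact (not_not.1 fun h => hωN (hbad h)).symm
  rw [lintegral_congr_ae hWx, lintegral_const, measure_univ, mul_one]

theorem eLpNorm_map_measure_of_aestronglyMeasurable_comp {E : Type*} [NormedAddCommGroup E]
    (hf : Measurable f) {ζ : β → E} (hζ : AEStronglyMeasurable (ζ ∘ f) μ) {p : ℝ≥0∞}
    (hp0 : p ≠ 0) (hp : p ≠ ∞) : eLpNorm ζ p (μ.map f) = eLpNorm (ζ ∘ f) p μ := by
  rw [eLpNorm_eq_lintegral_rpow_enorm_toReal hp0 hp,
    eLpNorm_eq_lintegral_rpow_enorm_toReal hp0 hp,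
    lintegral_map' (aemeasurable_map_of_aemeasurable_comp hf (hζ.enorm.pow_const _))
      hf.aemeasurable]
  rfl

theorem exists_eLpNorm_comp_sub_lt_of_approx_map {E : Type*} [NormedAddCommGroup E]
    (hf : Measurable f) {p : ℝ≥0∞} (hp0 : p ≠ 0) (hp : p ≠ ∞) {S : Set (β → E)}
    (hS : ∀ v ∈ S, AEStronglyMeasurable (v ∘ f) μ) {u : β → E}
    (hu : AEStronglyMeasurable (u ∘ f) μ)
    (happrox : ∀ ε : ℝ, 0 < ε → ∃ v ∈ S, eLpNorm (u - v) p (μ.map f) < ENNReal.ofReal ε)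
    (ε : ℝ) (hε : 0 < ε) : ∃ v ∈ (· ∘ f) '' S, eLpNorm (u ∘ f - v) p μ < ENNReal.ofReal ε := by
  obtain ⟨v, hvS, hv⟩ := happrox ε hε
  refine ⟨v ∘ f, mem_image_of_mem _ hvS, ?_⟩
  rwa [eLpNorm_map_measure_of_aestronglyMeasurable_comp (ζ := u - v) hf (hu.sub (hS v hvS))
    hp0 hp] at hv

end Pushforward

section ConditionalExpectation

variable {Ω : Type*} {m mΩ : MeasurableSpace Ω} {μ : Measure Ω}

theorem L2.real_inner_eq_integral_mul (w w' : Ω →₂[μ] ℝ) :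
    inner ℝ w w' = ∫ ω, w ω * w' ω ∂μ := by
  simp only [L2.inner_def, RCLike.inner_apply, conj_trivial, mul_comm]

theorem MemLp.integral_mul_eq_inner {u v : Ω → ℝ} (hu : MemLp u 2 μ) (hv : MemLp v 2 μ) :
    ∫ ω, u ω * v ω ∂μ = inner ℝ (hu.toLp u) (hv.toLp v) := by
  rw [L2.real_inner_eq_integral_mul]
  refine integral_congr_ae ?_
  filter_upwards [hu.coeFn_toLp, hv.coeFn_toLp] with ω hu hv
  rw [hu, hv]

theorem MemLp.integral_condExp_mul_condExp_eq_inner [IsFiniteMeasure μ] (hm : m ≤ mΩ)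
    {u v : Ω → ℝ} (hu : MemLp u 2 μ) (hv : MemLp v 2 μ) :
    ∫ ω, μ[u|m] ω * μ[v|m] ω ∂μ =
      inner ℝ (condExpL2 ℝ ℝ hm (hu.toLp u) : Ω →₂[μ] ℝ)
        (condExpL2 ℝ ℝ hm (hv.toLp v) : Ω →₂[μ] ℝ) := by
  rw [L2.real_inner_eq_integral_mul]
  refine integral_congr_ae ?_
  filter_upwards [hu.condExpL2_ae_eq_condExp (𝕜 := ℝ) hm,
    hv.condExpL2_ae_eq_condExp (𝕜 := ℝ) hm] with ω hu hv
  rw [hu, hv]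

theorem MemLp.toLp_mem_closure_range {E : Type*} [NormedAddCommGroup E] {p : ℝ≥0∞}
    [Fact (1 ≤ p)] {S : Set (Ω → E)} (hS : ∀ v ∈ S, MemLp v p μ) {u : Ω → E} (hu : MemLp u p μ)
    (happrox : ∀ ε : ℝ, 0 < ε → ∃ v ∈ S, eLpNorm (u - v) p μ < ENNReal.ofReal ε) :
    hu.toLp u ∈ closure (range fun v : S => (hS v v.2).toLp v) := by
  refine Metric.mem_closure_iff.2 fun ε hε => ?_
  obtain ⟨v, hvS, hv⟩ := happrox ε hε
  refine ⟨_, ⟨⟨v, hvS⟩, rfl⟩, ?_⟩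
  rw [dist_eq_norm, ← MemLp.toLp_sub, Lp.norm_toLp]
  exact ENNReal.toReal_lt_of_lt_ofReal hv

theorem integral_mul_eq_integral_condExp_mul_condExp_of_approx [IsFiniteMeasure μ]
    (hm : m ≤ mΩ) {S T : Set (Ω → ℝ)} (hS : ∀ u ∈ S, MemLp u 2 μ) (hT : ∀ v ∈ T, MemLp v 2 μ)
    (hST : ∀ u ∈ S, ∀ v ∈ T, ∫ ω, u ω * v ω ∂μ = ∫ ω, μ[u|m] ω * μ[v|m] ω ∂μ)
    {u v : Ω → ℝ} (hu : MemLp u 2 μ) (hv : MemLp v 2 μ)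
    (hu_approx : ∀ ε : ℝ, 0 < ε → ∃ u' ∈ S, eLpNorm (u - u') 2 μ < ENNReal.ofReal ε)
    (hv_approx : ∀ ε : ℝ, 0 < ε → ∃ v' ∈ T, eLpNorm (v - v') 2 μ < ENNReal.ofReal ε) :
    ∫ ω, u ω * v ω ∂μ = ∫ ω, μ[u|m] ω * μ[v|m] ω ∂μ := by
  let P := condExpL2 ℝ ℝ (μ := μ) hm
  have hinner_eq : EqOn (fun w : (Ω →₂[μ] ℝ) × (Ω →₂[μ] ℝ) => inner ℝ w.1 w.2)
      (fun w => inner ℝ (P w.1 : Ω →₂[μ] ℝ) (P w.2))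
      (range (fun u' : S => (hS u' u'.2).toLp u') ×ˢ
        range (fun v' : T => (hT v' v'.2).toLp v')) := by
    rintro ⟨_, _⟩ ⟨⟨⟨u', hu'⟩, rfl⟩, ⟨⟨v', hv'⟩, rfl⟩⟩
    simpa only [(hS u' hu').integral_mul_eq_inner (hT v' hv'),
      (hS u' hu').integral_condExp_mul_condExp_eq_inner hm (hT v' hv')] using hST u' hu' v' hv'
  have hinner_eq_closure := hinner_eq.closure (by fun_prop) (by fun_prop)
  rw [closure_prod_eq] at hinner_eq_closure
  rw [hu.integral_mul_eq_inner hv, hu.integral_condExp_mul_condExp_eq_inner hm hv]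
  exact hinner_eq_closure (mk_mem_prod (hu.toLp_mem_closure_range hS hu_approx)
    (hv.toLp_mem_closure_range hT hv_approx))

theorem condExp_mul_ae_eq_mul_condExp_of_forall_integral [IsFiniteMeasure μ] (hm : m ≤ mΩ)
    {f g : Ω → ℝ} (hf : MemLp f 2 μ) (hg : MemLp g 2 μ)
    (h : ∀ s, MeasurableSet[m] s →
      ∫ ω, s.indicator f ω * g ω ∂μ = ∫ ω, μ[s.indicator f|m] ω * μ[g|m] ω ∂μ) :
    μ[f * g|m] =ᵐ[μ] μ[f|m] * μ[g|m] := by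
  refine (ae_eq_condExp_of_forall_setIntegral_eq hm (hf.integrable_mul hg)
    (fun s _ _ => ((hf.condExp one_le_two).integrable_mul (hg.condExp one_le_two)).integrableOn)
    (fun s hs _ => ?_)
    (stronglyMeasurable_condExp.mul stronglyMeasurable_condExp).aestronglyMeasurable).symm
  calc ∫ ω in s, (μ[f|m] * μ[g|m]) ω ∂μ
      = ∫ ω, s.indicator (μ[f|m]) ω * μ[g|m] ω ∂μ := by
        rw [← integral_indicator (hm s hs)]
        exact integral_congr_ae (.of_forall fun ω => indicator_mul_left _ _ _)
    _ = ∫ ω, μ[s.indicator f|m] ω * μ[g|m] ω ∂μ := by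
        refine integral_congr_ae ?_
        filter_upwards [condExp_indicator (hf.integrable one_le_two) hs] with ω hω
        rw [hω]
    _ = ∫ ω in s, (f * g) ω ∂μ := by
        rw [← h s hs, ← integral_indicator (hm s hs)]
        exact integral_congr_ae (.of_forall fun ω => (indicator_mul_left _ _ _).symm)

end ConditionalExpectation

end MeasureTheory

namespace ProbabilityTheory

theorem condIndepFun_of_forall_integral_mul_eq {Ω α β γ : Type*} [MeasurableSpace Ω]
    [StandardBorelSpace Ω] [MeasurableSpace α] [MeasurableSpace β] [MeasurableSpace γ]
    {μ : Measure Ω} [IsFiniteMeasure μ] {X : Ω → α} {Y : Ω → β} {Z : Ω → γ}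
    (hX : Measurable X) (hY : Measurable Y) (hZ : Measurable Z)
    (h : ∀ (φ : α × γ → ℝ) (ψ : β → ℝ), MemLp φ 2 (μ.map fun ω => (X ω, Z ω)) →
      MemLp ψ 2 (μ.map Y) →
      ∫ ω, φ (X ω, Z ω) * ψ (Y ω) ∂μ =
        ∫ ω, μ[fun ω => φ (X ω, Z ω)|MeasurableSpace.comap Z inferInstance] ω
          * μ[fun ω => ψ (Y ω)|MeasurableSpace.comap Z inferInstance] ω ∂μ) :
    CondIndepFun (MeasurableSpace.comap Z inferInstance) hZ.comap_le X Y μ := by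
  rw [condIndepFun_iff_condExp_inter_preimage_eq_mul hX hY]
  intro s t hs ht
  have hindicator : ∀ (A : Set Ω), MeasurableSet A → MemLp (A.indicator fun _ => (1 : ℝ)) 2 μ :=
    fun A hA => memLp_indicator_const 2 hA 1 (Or.inr (measure_ne_top _ _))
  have hinter : (X ⁻¹' s ∩ Y ⁻¹' t).indicator (fun _ => (1 : ℝ))
      = (X ⁻¹' s).indicator (fun _ => 1) * (Y ⁻¹' t).indicator (fun _ => 1) :=
    inter_indicator_one
  rw [hinter]
  refine condExp_mul_ae_eq_mul_condExp_of_forall_integral hZ.comap_le (hindicator _ (hX hs))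
    (hindicator _ (hY ht)) ?_
  rintro _ ⟨D, hD, rfl⟩
  classical
  have hXZ : (Z ⁻¹' D).indicator ((X ⁻¹' s).indicator fun _ => (1 : ℝ))
      = fun ω => (s ×ˢ D).indicator (fun _ => 1) (X ω, Z ω) := by
    ext ω
    by_cases hZω : Z ω ∈ D <;> simp [indicator_apply, hZω]
  have hY' : (Y ⁻¹' t).indicator (fun _ => (1 : ℝ)) = fun ω => t.indicator (fun _ => 1) (Y ω) :=
    rfl
  rw [hXZ, hY']
  exact h _ _ (memLp_indicator_const 2 (hs.prod hD) 1 (Or.inr (measure_ne_top _ _)))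
    (memLp_indicator_const 2 ht 1 (Or.inr (measure_ne_top _ _)))

end ProbabilityTheory

theorem daudin_characterization_general
    (dX dY dZ : ℕ)
    {Ω : Type} [MeasurableSpace Ω] [StandardBorelSpace Ω]
    (μ : Measure Ω) [IsProbabilityMeasure μ]
    (X : Ω → EuclideanSpace ℝ (Fin dX)) (Y : Ω → EuclideanSpace ℝ (Fin dY))
    (Z : Ω → EuclideanSpace ℝ (Fin dZ))
    (hX : Measurable X) (hY : Measurable Y) (hZ : Measurable Z)
    -- the RKHSs, as families of (square-integrable) functions
    (FY : Set (EuclideanSpace ℝ (Fin dY) → ℝ))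
    (FXZ : Set (EuclideanSpace ℝ (Fin dX) × EuclideanSpace ℝ (Fin dZ) → ℝ))
    (hFYmem : ∀ g ∈ FY, MemLp (fun ω => g (Y ω)) 2 μ)
    (hFXZmem : ∀ φ ∈ FXZ, MemLp (fun ω => φ (X ω, Z ω)) 2 μ)
    -- ℍ_X ⊗ ℍ_Z is dense in L²(P_{XZ})
    (hdenseXZ : ∀ g : EuclideanSpace ℝ (Fin dX) × EuclideanSpace ℝ (Fin dZ) → ℝ,
      MemLp g 2 (μ.map (fun ω => (X ω, Z ω))) → ∀ ε : ℝ, 0 < ε →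
        ∃ f ∈ FXZ, eLpNorm (g - f) 2 (μ.map (fun ω => (X ω, Z ω))) < ENNReal.ofReal ε)
    -- ℍ_Y is dense in L²(P_Y)
    (hdenseY : ∀ g : EuclideanSpace ℝ (Fin dY) → ℝ,
      MemLp g 2 (μ.map Y) → ∀ ε : ℝ, 0 < ε →
        ∃ f ∈ FY, eLpNorm (g - f) 2 (μ.map Y) < ENNReal.ofReal ε)
    -- E[φ(X,Z) ψ(Y)] = E[E[φ(X,Z)|Z] E[ψ(Y)|Z]] for all φ ∈ ℍ_X ⊗ ℍ_Z, ψ ∈ ℍ_Y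
    (hfact2 : ∀ φ ∈ FXZ, ∀ ψ ∈ FY,
      ∫ ω, φ (X ω, Z ω) * ψ (Y ω) ∂μ =
        ∫ ω, ((μ[(fun ω' => φ (X ω', Z ω')) | MeasurableSpace.comap Z inferInstance]) ω)
          * ((μ[(fun ω' => ψ (Y ω')) | MeasurableSpace.comap Z inferInstance]) ω) ∂μ) :
    CondIndepFun (MeasurableSpace.comap Z inferInstance) hZ.comap_le X Y μ := by
  have hXZ : Measurable fun ω => (X ω, Z ω) := hX.prodMk hZ
  refine condIndepFun_of_forall_integral_mul_eq hX hY hZ fun φ ψ hφ hψ => ?_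
  have hΦ := (memLp_map_measure_iff hφ.1 hXZ.aemeasurable).1 hφ
  have hΨ := (memLp_map_measure_iff hψ.1 hY.aemeasurable).1 hψ
  refine integral_mul_eq_integral_condExp_mul_condExp_of_approx hZ.comap_le
    (S := (· ∘ fun ω => (X ω, Z ω)) '' FXZ) (T := (· ∘ Y) '' FY) ?_ ?_ ?_ hΦ hΨ
    (exists_eLpNorm_comp_sub_lt_of_approx_map hXZ two_ne_zero ENNReal.ofNat_ne_top
      (fun φ' hφ' => (hFXZmem φ' hφ').1) hΦ.1 (hdenseXZ φ hφ))
    (exists_eLpNorm_comp_sub_lt_of_approx_map hY two_ne_zero ENNReal.ofNat_ne_top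
      (fun ψ' hψ' => (hFYmem ψ' hψ').1) hΨ.1 (hdenseY ψ hψ))
  · rintro _ ⟨φ', hφ', rfl⟩
    exact hFXZmem φ' hφ'
  · rintro _ ⟨ψ', hψ', rfl⟩
    exact hFYmem ψ' hψ'
  · rintro _ ⟨φ', hφ', rfl⟩ _ ⟨ψ', hψ', rfl⟩
    exact hfact2 φ' hφ' ψ' hψ'

/-- Daudin-type sufficiency: if the RKHS ℍ_X ⊗ ℍ_Z (modeled as a family FXZ of
functions) is dense in L²(P_{XZ}) and ℍ_Y (family FY) is dense in L²(P_Y), and the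
conditional-covariance factorization holds over the RKHS test functions, then X ⊥ Y | Z. -/
theorem daudin_characterization
    (dX dY dZ : ℕ)
    {Ω : Type} [MeasurableSpace Ω] [StandardBorelSpace Ω]
    (μ : Measure Ω) [IsProbabilityMeasure μ]
    (X : Ω → EuclideanSpace ℝ (Fin dX)) (Y : Ω → EuclideanSpace ℝ (Fin dY))
    (Z : Ω → EuclideanSpace ℝ (Fin dZ))
    (hX : Measurable X) (hY : Measurable Y) (hZ : Measurable Z)
    -- the RKHSs, as families of (square-integrable) functions
    (FX : Set (EuclideanSpace ℝ (Fin dX) → ℝ))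
    (FY : Set (EuclideanSpace ℝ (Fin dY) → ℝ))
    (FXZ : Set (EuclideanSpace ℝ (Fin dX) × EuclideanSpace ℝ (Fin dZ) → ℝ))
    (hFXmem : ∀ f ∈ FX, MemLp (fun ω => f (X ω)) 2 μ)
    (hFYmem : ∀ g ∈ FY, MemLp (fun ω => g (Y ω)) 2 μ)
    (hFXZmem : ∀ φ ∈ FXZ, MemLp (fun ω => φ (X ω, Z ω)) 2 μ)
    -- ℍ_X ⊗ ℍ_Z is dense in L²(P_{XZ})
    (hdenseXZ : ∀ g : EuclideanSpace ℝ (Fin dX) × EuclideanSpace ℝ (Fin dZ) → ℝ,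
      MemLp g 2 (μ.map (fun ω => (X ω, Z ω))) → ∀ ε : ℝ, 0 < ε →
        ∃ f ∈ FXZ, eLpNorm (g - f) 2 (μ.map (fun ω => (X ω, Z ω))) < ENNReal.ofReal ε)
    -- ℍ_Y is dense in L²(P_Y)
    (hdenseY : ∀ g : EuclideanSpace ℝ (Fin dY) → ℝ,
      MemLp g 2 (μ.map Y) → ∀ ε : ℝ, 0 < ε →
        ∃ f ∈ FY, eLpNorm (g - f) 2 (μ.map Y) < ENNReal.ofReal ε)
    -- E[f(X) g(Y) | Z] = E[f(X)|Z] ⬝ E[g(Y)|Z] a.s. for all f ∈ ℍ_X, g ∈ ℍ_Y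
    (hfact1 : ∀ f ∈ FX, ∀ g ∈ FY,
      μ[(fun ω => f (X ω) * g (Y ω)) | MeasurableSpace.comap Z inferInstance]
        =ᵐ[μ] fun ω =>
          ((μ[(fun ω' => f (X ω')) | MeasurableSpace.comap Z inferInstance]) ω)
            * ((μ[(fun ω' => g (Y ω')) | MeasurableSpace.comap Z inferInstance]) ω))
    -- E[φ(X,Z) ψ(Y)] = E[E[φ(X,Z)|Z] E[ψ(Y)|Z]] for all φ ∈ ℍ_X ⊗ ℍ_Z, ψ ∈ ℍ_Y
    (hfact2 : ∀ φ ∈ FXZ, ∀ ψ ∈ FY,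
      ∫ ω, φ (X ω, Z ω) * ψ (Y ω) ∂μ =
        ∫ ω, ((μ[(fun ω' => φ (X ω', Z ω')) | MeasurableSpace.comap Z inferInstance]) ω)
          * ((μ[(fun ω' => ψ (Y ω')) | MeasurableSpace.comap Z inferInstance]) ω) ∂μ) :
    CondIndepFun (MeasurableSpace.comap Z inferInstance) hZ.comap_le X Y μ :=
  daudin_characterization_general dX dY dZ μ X Y Z hX hY hZ FY FXZ hFYmem hFXZmem hdenseXZ hdenseY
    hfact2
end
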